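/- arXiv:1912.03607 — 2 statements merged into one kernel-verified Lean document; each statement's English description precedes it below -/
import Mathlib

section
/- Let g : [a, c] → ℝ be differentiable with g(a) = 0, and suppose that for every x in [a, c] with g(x) = 0 we have g'(x) > 0. Then g(x) ≥ 0 for all x in [a, c]. -/
/-- If `g` is differentiable on `[a,c]` with `g(a) = 0` and `g'(x) > 0`
whenever `g(x) = 0`, then `g ≥ 0` on `[a,c]`. -/
theorem stmt_3 (a c : ℝ) (hac : a ≤ c) (g g' : ℝ → ℝ)
    (hderiv : ∀ x ∈ Set.Icc a c, HasDerivAt g (g' x) x)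
    (hga : g a = 0)
    (hzero : ∀ x ∈ Set.Icc a c, g x = 0 → 0 < g' x) :
    ∀ x ∈ Set.Icc a c, 0 ≤ g x := by
  have hcont : ContinuousOn g (Set.Icc a c) := fun t ht =>
    (hderiv t ht).continuousAt.continuousWithinAt
  intro x hx
  by_contra hneg
  push_neg at hneg
  set S : Set ℝ := Set.Icc a x ∩ g ⁻¹' {0} with hS
  have hsub : Set.Icc a x ⊆ Set.Icc a c := Set.Icc_subset_Icc le_rfl hx.2
  have hSclosed : IsClosed S :=
    (hcont.mono hsub).preimage_isClosed_of_isClosed isClosed_Icc isClosed_singleton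
  have hSne : S.Nonempty := ⟨a, ⟨le_rfl, hx.1⟩, hga⟩
  have hSbdd : BddAbove S := ⟨x, fun t ht => ht.1.2⟩
  set s := sSup S with hs
  have hsmem : s ∈ S := hSclosed.csSup_mem hSne hSbdd
  have hsIcc : s ∈ Set.Icc a c := hsub hsmem.1
  have hgs : g s = 0 := hsmem.2
  have hsx : s < x := by
    rcases lt_or_eq_of_le hsmem.1.2 with h | h
    · exact h
    · exfalso; rw [h] at hgs; linarith
  have hd : HasDerivAt g (g' s) s := hderiv s hsIcc
  have hpos : 0 < g' s := hzero s hsIcc hgs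
  -- slope is eventually positive to the right of s
  have hslope : Filter.Tendsto (slope g s) (nhdsWithin s {s}ᶜ) (nhds (g' s)) :=
    hasDerivAt_iff_tendsto_slope.1 hd
  have h1 : ∀ᶠ t in nhdsWithin s {s}ᶜ, 0 < slope g s t :=
    hslope.eventually (eventually_gt_nhds hpos)
  have hle : nhdsWithin s (Set.Ioi s) ≤ nhdsWithin s {s}ᶜ :=
    nhdsWithin_mono s (fun t ht => ne_of_gt ht)
  have h2 : ∀ᶠ t in nhdsWithin s (Set.Ioi s), 0 < slope g s t := hle h1
  have h3 : ∀ᶠ t in nhdsWithin s (Set.Ioi s), t < x :=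
    eventually_nhdsWithin_of_eventually_nhds (eventually_lt_nhds hsx)
  have h4 : ∀ᶠ t in nhdsWithin s (Set.Ioi s), t ∈ Set.Ioi s :=
    eventually_mem_nhdsWithin
  obtain ⟨t, hts, htx, hst⟩ := (h2.and (h3.and h4)).exists
  have hst' : s < t := hst
  have hgt : 0 < g t := by
    rw [slope_def_field, hgs, sub_zero] at hts
    have := mul_pos hts (sub_pos.2 hst')
    rwa [div_mul_cancel₀ _ (ne_of_gt (sub_pos.2 hst'))] at this
  -- IVT on [t, x] : g t > 0, g x < 0
  have htx' : t ≤ x := le_of_lt htx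
  have hat : a ≤ t := le_trans hsmem.1.1 (le_of_lt hst')
  have hsub2 : Set.Icc t x ⊆ Set.Icc a c := Set.Icc_subset_Icc hat hx.2
  have hivt := intermediate_value_Icc' htx' (hcont.mono hsub2)
  have h0mem : (0 : ℝ) ∈ Set.Icc (g x) (g t) := ⟨le_of_lt hneg, le_of_lt hgt⟩
  obtain ⟨u, hu, hgu⟩ := hivt h0mem
  have huS : u ∈ S := ⟨⟨le_trans hat hu.1, hu.2⟩, hgu⟩
  have : u ≤ s := le_csSup hSbdd huS
  exact absurd (lt_of_lt_of_le hst' (le_trans hu.1 this)) (lt_irrefl s)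
end

section
/- Let F : ℝ → ℝ be a cumulative distribution function with continuous density f (so F' = f), and let b : [a,c] → ℝ be differentiable. Suppose that for every v in [a,c], the function t ↦ F(b(t)+t)·(v − (b(t)+t)) + t attains a maximum over [a,c] at t = v, with v in the interior. Then for every interior v, [f(b(v)+v)·b(v) + F(b(v)+v)]·(b'(v) + 1) = 1. -/
theorem IsLocalMax.mimicPayoff_firstOrderCondition {F f g : ℝ → ℝ} {v d : ℝ}
    (hF : HasDerivAt F (f (g v)) (g v)) (hg : HasDerivAt g d v)
    (hmax : IsLocalMax (fun t => F (g t) * (v - g t) + t) v) :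
    (f (g v) * (g v - v) + F (g v)) * d = 1 := by
  have hderiv : HasDerivAt (fun t => F (g t) * (v - g t) + t)
      (f (g v) * d * (v - g v) + F (g v) * -d + 1) v :=
    ((hF.comp v hg).mul (hg.const_sub v)).add (hasDerivAt_id v)
  linear_combination -hmax.hasDerivAt_eq_zero hderiv

theorem stmt_7_general (F f : ℝ → ℝ)
    (hF : ∀ x, HasDerivAt F (f x) x)
    (a c : ℝ) (b b' : ℝ → ℝ)
    (hb : ∀ v ∈ Set.Icc a c, HasDerivAt b (b' v) v)
    (hmax : ∀ v ∈ Set.Ioo a c,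
      IsMaxOn (fun t => F (b t + t) * (v - (b t + t)) + t) (Set.Icc a c) v) :
    ∀ v ∈ Set.Ioo a c,
      (f (b v + v) * b v + F (b v + v)) * (b' v + 1) = 1 := by
  intro v hv
  have hshift : HasDerivAt (fun t => b t + t) (b' v + 1) v :=
    (hb v (Set.Ioo_subset_Icc_self hv)).add (hasDerivAt_id v)
  have hfoc := IsLocalMax.mimicPayoff_firstOrderCondition (g := fun t => b t + t)
    (hF (b v + v)) hshift ((hmax v hv).isLocalMax (Icc_mem_nhds hv.1 hv.2))
  rwa [add_sub_cancel_right] at hfoc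

/-- First-order condition for the separating equilibrium: if for every `v ∈ [a,c]`
the function `t ↦ F(b(t)+t)(v − (b(t)+t)) + t` attains a maximum on `[a,c]` at
`t = v`, with `v` interior, then
`(f(b(v)+v)b(v) + F(b(v)+v))(b'(v)+1) = 1` at every interior `v`. -/
theorem stmt_7 (F f : ℝ → ℝ) (hf : Continuous f)
    (hF : ∀ x, HasDerivAt F (f x) x)
    (a c : ℝ) (hac : a < c) (b b' : ℝ → ℝ)
    (hb : ∀ v ∈ Set.Icc a c, HasDerivAt b (b' v) v)
    (hmax : ∀ v ∈ Set.Ioo a c,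
      IsMaxOn (fun t => F (b t + t) * (v - (b t + t)) + t) (Set.Icc a c) v) :
    ∀ v ∈ Set.Ioo a c,
      (f (b v + v) * b v + F (b v + v)) * (b' v + 1) = 1 :=
  stmt_7_general F f hF a c b b' hb hmax
end
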